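/- arXiv:1505.00703 — 2 statements merged into one kernel-verified Lean document; each statement's English description precedes it below -/
import Mathlib

section
/- (Tree based expansion.) Let T be a rooted tree with vertices v₁,…,v_r. For each i, let G_{v_i}^{(1)},…,G_{v_i}^{(n_i)} be Generalized Bartlett graphs (n_i ≥ 0), all vertex sets pairwise disjoint and disjoint from T. Form the graph G by taking the disjoint union of T and all the graphs G_{v_i}^{(j)}, and adding an edge from v_i to every vertex of G_{v_i}^{(j)} for every i and every 1 ≤ j ≤ n_i. Label the vertices of G by {1,…,|V(G)|} so that: the induced ordering on each G_{v_i}^{(j)} is a GB ordering of it, every vertex of every attached graph G_{v_i}^{(j)} receives a smaller label than every vertex of T, and every vertex of T receives a larger label than each of its children in T. Then this labeling is a GB ordering of G; in particular, G is a Generalized Bartlett graph. -/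
/-!
By the fill-path lemma, `uv` is an edge of the triangulation exactly when some walk from `u` to
`v` in `G` has all its inner vertices eliminated before both `u` and `v`.

Such a walk between two tree vertices may be taken to be a path. A path cannot visit a block,
which it could only enter and leave through the block's owner, so it is a path of the tree; as
every tree vertex has at most one neighbour with a larger label (its parent), the path is a
single edge. A fill walk starting in block `k` can only leave the block through `owner k`, which
is labelled above the walk's inner vertices and adjacent to the whole block. Hence every fill
edge of `G` that is not an edge of `G` is a fill edge of a single block under its induced
ordering, and a triangle of such edges would contradict the block's ordering being GB.
-/

open SimpleGraph

variable {V : Type*}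

/-- One step of the elimination/triangulation process: at step `k` (0-based) the vertex with
label `k` is eliminated, and all pairs of its neighbours with larger labels are joined. -/
def triStep {n : ℕ} (σ : V ≃ Fin n) (H : SimpleGraph V) (k : ℕ) : SimpleGraph V where
  Adj u v := H.Adj u v ∨
    (u ≠ v ∧ ∃ hk : k < n, k < (σ u : ℕ) ∧ k < (σ v : ℕ) ∧
      H.Adj u (σ.symm ⟨k, hk⟩) ∧ H.Adj v (σ.symm ⟨k, hk⟩))
  symm := by
    refine ⟨?_⟩
    rintro u v (h | ⟨hne, hk, h1, h2, h3, h4⟩)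
    · exact Or.inl h.symm
    · exact Or.inr ⟨hne.symm, hk, h2, h1, h4, h3⟩
  loopless := by
    refine ⟨?_⟩
    rintro u (h | ⟨hne, _⟩)
    · exact H.irrefl h
    · exact hne rfl

/-- The sequence of graphs `E_0, E_1, …` in the triangulation process. -/
def triSeq {n : ℕ} (σ : V ≃ Fin n) (G : SimpleGraph V) : ℕ → SimpleGraph V
  | 0 => G
  | k + 1 => triStep σ (triSeq σ G k) k

/-- The triangulation `D^σ(G)` of `G` under the ordering `σ` (`p − 2` elimination steps). -/
def triangulation {n : ℕ} (σ : V ≃ Fin n) (G : SimpleGraph V) : SimpleGraph V :=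
  triSeq σ G (n - 2)

/-- `σ` is a perfect elimination ordering of `G`: for every `j`, the vertex `σ⁻¹(j)` together
with its higher-labelled neighbours forms a clique. -/
def IsPerfectElimOrdering {n : ℕ} (σ : V ≃ Fin n) (G : SimpleGraph V) : Prop :=
  ∀ j : Fin n,
    G.IsClique ({σ.symm j} ∪ {v : V | (j : ℕ) < (σ v : ℕ) ∧ G.Adj v (σ.symm j)})

/-- A graph is decomposable (chordal) if it has no induced cycle of length `≥ 4`. -/
def IsDecomposable (G : SimpleGraph V) : Prop :=
  ∀ n : ℕ, 4 ≤ n → IsEmpty (SimpleGraph.cycleGraph n ↪g G)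

/-- `σ` is a Generalized Bartlett ordering of `G`: no triangle of `D^σ(G)` consists of three
non-edges of `G`. -/
def IsGBOrdering {n : ℕ} (σ : V ≃ Fin n) (G : SimpleGraph V) : Prop :=
  ¬ ∃ u v w : V,
      ¬ G.Adj u v ∧ ¬ G.Adj v w ∧ ¬ G.Adj u w ∧
      (triangulation σ G).Adj u v ∧ (triangulation σ G).Adj v w ∧
      (triangulation σ G).Adj u w

/-- `G` is a Generalized Bartlett graph: it admits a Generalized Bartlett ordering. -/
def IsGB (G : SimpleGraph V) : Prop :=
  ∃ (n : ℕ) (σ : V ≃ Fin n), IsGBOrdering σ G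

section Triangulation

variable {n : ℕ} {G : SimpleGraph V}

/-- Along `w` the fill edge `uv` appears within the first `m` elimination steps: every inner
vertex is eliminated among the first `m`, and before both ends. -/
def IsFillWalk (σ : V ≃ Fin n) (m : ℕ) {u v : V} (w : G.Walk u v) : Prop :=
  ∀ x ∈ w.support, x = u ∨ x = v ∨ ((σ x : ℕ) < m ∧ σ x < σ u ∧ σ x < σ v)

namespace IsFillWalk

variable {σ : V ≃ Fin n} {m : ℕ} {u v : V}

lemma mono {m' : ℕ} (hm : m ≤ m') {w : G.Walk u v} (hw : IsFillWalk σ m w) :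
    IsFillWalk σ m' w :=
  fun x hx => (hw x hx).imp_right <| Or.imp_right fun h => ⟨h.1.trans_le hm, h.2⟩

lemma of_support_subset {w w' : G.Walk u v} (hw : IsFillWalk σ m w)
    (h : w'.support ⊆ w.support) : IsFillWalk σ m w' :=
  fun x hx => hw x (h hx)

lemma reverse {w : G.Walk u v} (hw : IsFillWalk σ m w) : IsFillWalk σ m w.reverse := by
  intro x hx
  rcases hw x (by simpa using hx) with h | h | ⟨hm, hu, hv⟩
  exacts [Or.inr (Or.inl h), Or.inl h, Or.inr (Or.inr ⟨hm, hv, hu⟩)]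

lemma append {z : V} {w₁ : G.Walk u z} {w₂ : G.Walk z v} (h₁ : IsFillWalk σ m w₁)
    (h₂ : IsFillWalk σ m w₂) (hzm : (σ z : ℕ) = m) (hzu : σ z < σ u) (hzv : σ z < σ v) :
    IsFillWalk σ (m + 1) (w₁.append w₂) := by
  intro x hx
  rw [Walk.mem_support_append_iff] at hx
  rcases hx with hx | hx
  · rcases h₁ x hx with rfl | rfl | ⟨hm, hu, hz⟩
    · exact Or.inl rfl
    · exact Or.inr (Or.inr ⟨by omega, hzu, hzv⟩)
    · exact Or.inr (Or.inr ⟨by omega, hu, hz.trans hzv⟩)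
  · rcases h₂ x hx with rfl | rfl | ⟨hm, hz, hv⟩
    · exact Or.inr (Or.inr ⟨by omega, hzu, hzv⟩)
    · exact Or.inr (Or.inl rfl)
    · exact Or.inr (Or.inr ⟨by omega, hz.trans hzu, hv⟩)

lemma takeUntil [DecidableEq V] {w : G.Walk u v} (hp : w.IsPath) (hw : IsFillWalk σ (m + 1) w)
    {z : V} (hz : z ∈ w.support) (hzv : z ≠ v) (hzm : (σ z : ℕ) = m) :
    IsFillWalk σ m (w.takeUntil z hz) := by
  intro x hx
  by_cases hxz : x = z
  · exact Or.inr (Or.inl hxz)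
  have hxm : (σ x : ℕ) ≠ m := fun h => hxz (σ.injective (Fin.ext (h.trans hzm.symm)))
  rcases hw x (w.support_takeUntil_subset_support hz hx) with h | rfl | ⟨h₁, h₂, -⟩
  · exact Or.inl h
  · exact absurd hx (Walk.endpoint_notMem_support_takeUntil hp hz hzv.symm)
  · exact Or.inr (Or.inr ⟨by omega, h₂, by rw [Fin.lt_def]; omega⟩)

lemma of_succ {w : G.Walk u v} (hw : IsFillWalk σ (m + 1) w)
    (h : ∀ x ∈ w.support, x ≠ u → x ≠ v → (σ x : ℕ) ≠ m) : IsFillWalk σ m w := by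
  intro x hx
  by_cases hxu : x = u
  · exact Or.inl hxu
  by_cases hxv : x = v
  · exact Or.inr (Or.inl hxv)
  obtain ⟨hm, hu, hv⟩ := ((hw x hx).resolve_left hxu).resolve_left hxv
  exact Or.inr (Or.inr ⟨lt_of_le_of_ne (Nat.le_of_lt_succ hm) (h x hx hxu hxv), hu, hv⟩)

lemma adj_of_zero (hne : u ≠ v) (w : G.Walk u v) (hw : IsFillWalk σ 0 w) : G.Adj u v := by
  cases w with
  | nil => exact absurd rfl hne
  | @cons _ y _ h q =>
    rcases hw y (by simp) with rfl | rfl | ⟨hy, -⟩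
    · exact absurd h (G.irrefl)
    · exact h
    · exact absurd hy (Nat.not_lt_zero _)

end IsFillWalk

variable (σ : V ≃ Fin n)

theorem triSeq_adj_iff (m : ℕ) {u v : V} :
    (triSeq σ G m).Adj u v ↔ u ≠ v ∧ ∃ w : G.Walk u v, IsFillWalk σ m w := by
  classical
  induction m generalizing u v with
  | zero =>
    refine ⟨fun h => ⟨h.ne, (show G.Adj u v from h).toWalk, fun x hx => ?_⟩,
      fun ⟨hne, w, hw⟩ => hw.adj_of_zero hne w⟩
    have : x = u ∨ x = v := by simpa [Adj.toWalk] using hx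
    exact this.imp_right Or.inl
  | succ m ih =>
    change (triStep σ (triSeq σ G m) m).Adj u v ↔ _
    constructor
    · rintro (h | ⟨hne, hm, hu, hv, hadju, hadjv⟩)
      · obtain ⟨hne, w, hw⟩ := ih.1 h
        exact ⟨hne, w, hw.mono m.le_succ⟩
      · obtain ⟨-, w₁, h₁⟩ := ih.1 hadju
        obtain ⟨-, w₂, h₂⟩ := ih.1 hadjv
        exact ⟨hne, w₁.append w₂.reverse, h₁.append h₂.reverse (by simp) (by simpa [Fin.lt_def])
          (by simpa [Fin.lt_def])⟩
    · rintro ⟨hne, w, hw⟩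
      have hp := w.bypass_isPath
      have hb := hw.of_support_subset w.support_bypass_subset_support
      by_cases h : ∃ z ∈ w.bypass.support, z ≠ u ∧ z ≠ v ∧ (σ z : ℕ) = m
      · -- the inner vertex eliminated at step `m` is joined to both ends by then
        obtain ⟨z, hz, hzu, hzv, hzm⟩ := h
        obtain ⟨-, hu, hv⟩ := ((hb z hz).resolve_left hzu).resolve_left hzv
        have hk : m < n := hzm ▸ (σ z).isLt
        have hσz : σ.symm ⟨m, hk⟩ = z := σ.symm_apply_eq.2 (Fin.ext hzm.symm)
        have h₁ := ih.2 ⟨hzu.symm, _, hb.takeUntil hp hz hzv hzm⟩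
        have h₂ := ih.2 ⟨hzv.symm, _, hb.reverse.takeUntil hp.reverse (by simpa using hz) hzu hzm⟩
        refine Or.inr ⟨hne, hk, ?_, ?_, hσz ▸ h₁, hσz ▸ h₂⟩ <;> rw [Fin.lt_def] at hu hv <;> omega
      · push Not at h
        exact Or.inl (ih.2 ⟨hne, w.bypass, hb.of_succ h⟩)

theorem triangulation_adj_iff {u v : V} :
    (triangulation σ G).Adj u v ↔ u ≠ v ∧ ∃ w : G.Walk u v, IsFillWalk σ n w := by
  rw [triangulation, triSeq_adj_iff]
  refine and_congr_right fun hne => exists_congr fun w =>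
    ⟨fun hw => hw.mono (Nat.sub_le n 2), fun hw x hx => ?_⟩
  rcases hw x hx with h | h | ⟨-, hu, hv⟩
  · exact Or.inl h
  · exact Or.inr (Or.inl h)
  · have : (σ u : ℕ) ≠ σ v := fun h => hne (σ.injective (Fin.ext h))
    have := (σ u).isLt
    have := (σ v).isLt
    rw [Fin.lt_def] at hu hv
    exact Or.inr (Or.inr ⟨by omega, hu, hv⟩)

theorem triangulation_induce_adj {m k : ℕ} {S : Set V} (τ : S ≃ Fin k)
    (hτ : ∀ a b : S, σ a < σ b → τ a < τ b) {u v : V} (hne : u ≠ v) (w : G.Walk u v)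
    (hw : IsFillWalk σ m w) (hS : ∀ x ∈ w.support, x ∈ S) :
    (triangulation τ (G.induce S)).Adj ⟨u, hS u w.start_mem_support⟩
      ⟨v, hS v w.end_mem_support⟩ := by
  refine (triangulation_adj_iff τ).2 ⟨fun h => hne (congrArg Subtype.val h), w.induce S hS,
    fun x hx => ?_⟩
  rcases hw x (by simpa using hx) with h | h | ⟨-, hu, hv⟩
  · exact Or.inl (Subtype.ext h)
  · exact Or.inr (Or.inl (Subtype.ext h))
  · exact Or.inr (Or.inr ⟨(τ x).isLt, hτ _ _ hu, hτ _ _ hv⟩)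

end Triangulation

namespace SimpleGraph

variable {W α : Type*} [LinearOrder α] {H : SimpleGraph W} {f : W → α}

lemma le_of_isPath_of_lt_adj (hf : Function.Injective f)
    (hH : ∀ {x y z}, H.Adj x y → H.Adj x z → f x < f y → f x < f z → y = z)
    {c x v : W} (hxc : H.Adj x c) (hlt : f x < f c) (q : H.Walk x v) (hq : q.IsPath)
    (hc : c ∉ q.support) : f v ≤ f x := by
  induction q generalizing c with
  | nil => exact le_rfl
  | @cons x y v h q ih =>
    obtain ⟨hq, hxq⟩ := (Walk.cons_isPath_iff h q).1 hq
    have hyc : y ≠ c := fun hyc => hc (by subst hyc; simp)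
    have hyx : f y < f x := (lt_or_gt_of_ne (hf.ne h.ne.symm)).resolve_right
      fun hxy => hyc (hH h hxc hxy hlt)
    exact (ih h.symm hyx hq hxq).trans hyx.le

lemma adj_of_isPath_of_lt (hf : Function.Injective f)
    (hH : ∀ {x y z}, H.Adj x y → H.Adj x z → f x < f y → f x < f z → y = z)
    {u v : W} (hne : u ≠ v) (p : H.Walk u v) (hp : p.IsPath)
    (hlow : ∀ x ∈ p.support, x = u ∨ x = v ∨ (f x < f u ∧ f x < f v)) : H.Adj u v := by
  cases p with
  | nil => exact absurd rfl hne
  | @cons _ y _ h q =>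
    obtain ⟨hq, huq⟩ := (Walk.cons_isPath_iff h q).1 hp
    rcases hlow y (by simp) with rfl | rfl | ⟨hyu, hyv⟩
    · exact absurd h (H.irrefl)
    · exact h
    · exact absurd (le_of_isPath_of_lt_adj hf hH h.symm hyu q hq huq) (not_le.2 hyv)

lemma IsTree.eq_of_adj_of_dist_lt (hT : H.IsTree) (r : W) {x y z : W} (hy : H.Adj x y)
    (hz : H.Adj x z) (hyx : H.dist r y < H.dist r x) (hzx : H.dist r z < H.dist r x) :
    y = z := by
  classical
  obtain ⟨p, hp, -⟩ := hT.connected.exists_path_of_dist r x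
  suffices h : ∀ {y}, H.Adj x y → H.dist r y < H.dist r x → y = p.penultimate from
    (h hy hyx).trans (h hz hzx).symm
  intro y hy hyx
  obtain ⟨q, hq, hql⟩ := hT.connected.exists_path_of_dist r y
  have hxq : x ∉ q.support := fun hx => by
    have := dist_le (q.takeUntil x hx)
    have := q.length_takeUntil_le_length hx
    omega
  exact hT.isAcyclic.eq_penultimate_of_adj_end hp hy
    (hT.isAcyclic.mem_support_of_ne_mem_support_of_adj_of_isPath hp hq hy hxq)

lemma IsTree.eq_of_adj_of_lt (hT : H.IsTree) (r : W)
    (hf : ∀ u v, H.Adj u v → H.dist r u < H.dist r v → f v < f u) {x y z : W}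
    (hy : H.Adj x y) (hz : H.Adj x z) (hxy : f x < f y) (hxz : f x < f z) : y = z := by
  have closer : ∀ {y}, H.Adj x y → f x < f y → H.dist r y < H.dist r x := fun hy hxy =>
    (lt_or_gt_of_ne (hT.dist_ne_of_adj r hy).symm).resolve_right fun h => (hf _ _ hy h).asymm hxy
  exact hT.eq_of_adj_of_dist_lt r hy hz (closer hy hxy) (closer hz hxz)

end SimpleGraph

/-- `G` is the graph of a tree based expansion: `T` holds the tree, and the block `B k` is an
attached graph joined completely to `owner k`. -/
structure IsBlockAttachment {ι : Type*} (G : SimpleGraph V) (T : Set V) (B : ι → Set V)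
    (owner : ι → V) : Prop where
  owner_mem : ∀ k, owner k ∈ T
  notMem_tree : ∀ k, ∀ v ∈ B k, v ∉ T
  notMem_block : ∀ k k', k ≠ k' → ∀ v ∈ B k, v ∉ B k'
  mem_cover : ∀ v, v ∈ T ∨ ∃ k, v ∈ B k
  adj_owner : ∀ k, ∀ v ∈ B k, G.Adj (owner k) v
  adj_cases : ∀ u v, G.Adj u v → (u ∈ T ∧ v ∈ T) ∨ (∃ k, u ∈ B k ∧ v ∈ B k) ∨
    (∃ k, u = owner k ∧ v ∈ B k) ∨ (∃ k, v = owner k ∧ u ∈ B k)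

namespace IsBlockAttachment

variable {ι : Type*} {G : SimpleGraph V} {T : Set V} {B : ι → Set V} {owner : ι → V}

lemma eq_of_mem (hG : IsBlockAttachment G T B owner) {k k' : ι} {v : V} (hk : v ∈ B k)
    (hk' : v ∈ B k') : k = k' :=
  by_contra fun h => hG.notMem_block k k' h v hk hk'

lemma eq_owner_of_adj (hG : IsBlockAttachment G T B owner) {k : ι} {x y : V} (hx : x ∈ B k)
    (hxy : G.Adj x y) (hy : y ∉ B k) : y = owner k := by
  rcases hG.adj_cases x y hxy with ⟨hxT, -⟩ | ⟨k', hx', hy'⟩ | ⟨k', rfl, -⟩ | ⟨k', rfl, hx'⟩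
  · exact absurd hxT (hG.notMem_tree k x hx)
  · exact absurd (hG.eq_of_mem hx' hx ▸ hy') hy
  · exact absurd (hG.owner_mem k') (hG.notMem_tree k _ hx)
  · rw [hG.eq_of_mem hx' hx]

lemma owner_mem_support (hG : IsBlockAttachment G T B owner) {k : ι} {x t : V} (hx : x ∈ B k)
    (ht : t ∉ B k) (w : G.Walk x t) : owner k ∈ w.support := by
  induction w with
  | nil => exact absurd hx ht
  | @cons x y t h q ih =>
    by_cases hy : y ∈ B k
    · exact List.mem_cons_of_mem _ (ih hy ht)
    · simp [← hG.eq_owner_of_adj hx h hy]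

lemma mem_of_mem_support_of_isPath (hG : IsBlockAttachment G T B owner) {a b : V} (ha : a ∈ T)
    (hb : b ∈ T) (p : G.Walk a b) (hp : p.IsPath) : ∀ x ∈ p.support, x ∈ T := by
  induction p with
  | nil => simpa using ha
  | @cons a y b h q ih =>
    obtain ⟨hq, haq⟩ := (Walk.cons_isPath_iff h q).1 hp
    by_cases hy : y ∈ T
    · simpa [ha] using ih hy hb hq
    obtain ⟨k, hyk⟩ := (hG.mem_cover y).resolve_left hy
    have hak : a = owner k := hG.eq_owner_of_adj hyk h.symm fun h' => hG.notMem_tree k a h' ha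
    exact absurd (hak ▸ hG.owner_mem_support hyk (fun h' => hG.notMem_tree k b h' hb) q) haq

variable {n : ℕ} {σ : V ≃ Fin n}

lemma mem_of_mem_support_of_isFillWalk (hG : IsBlockAttachment G T B owner)
    (hbelow : ∀ k, ∀ v ∈ B k, ∀ t ∈ T, σ v < σ t) {m : ℕ} {k : ι} {a b : V} (ha : a ∈ B k)
    (hab : ¬G.Adj a b) (w : G.Walk a b) (hw : IsFillWalk σ m w) : ∀ x ∈ w.support, x ∈ B k := by
  classical
  intro x hx
  by_contra hxk
  have ho := w.support_takeUntil_subset_support hx (hG.owner_mem_support ha hxk (w.takeUntil x hx))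
  have hlt := hbelow k a ha _ (hG.owner_mem k)
  rcases hw _ ho with h | h | ⟨-, h, -⟩
  · exact hlt.ne' (congrArg σ h)
  · exact hab (h ▸ (hG.adj_owner k a ha).symm)
  · exact h.asymm hlt

lemma adj_of_isFillWalk_of_mem_tree (hG : IsBlockAttachment G T B owner)
    (hT : (G.induce T).IsTree) (r : T)
    (hchild : ∀ u v : T, (G.induce T).Adj u v →
      (G.induce T).dist r u < (G.induce T).dist r v → σ v < σ u)
    {m : ℕ} {a b : V} (ha : a ∈ T) (hb : b ∈ T) (hne : a ≠ b) (w : G.Walk a b)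
    (hw : IsFillWalk σ m w) : G.Adj a b := by
  classical
  have hp := w.bypass_isPath
  have hpT := hG.mem_of_mem_support_of_isPath ha hb _ hp
  refine adj_of_isPath_of_lt (f := fun x : T => σ x) (σ.injective.comp Subtype.val_injective)
    (hT.eq_of_adj_of_lt r hchild) (u := ⟨a, ha⟩) (v := ⟨b, hb⟩) (by simpa using hne)
    (w.bypass.induce T hpT) (Walk.IsPath.of_map (by rwa [Walk.map_induce])) fun x hx => ?_
  rcases hw x (w.support_bypass_subset_support (by simpa using hx)) with h | h | ⟨-, hu, hv⟩
  · exact Or.inl (Subtype.ext h)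
  · exact Or.inr (Or.inl (Subtype.ext h))
  · exact Or.inr (Or.inr ⟨hu, hv⟩)

end IsBlockAttachment

namespace IsBlockAttachment

variable {ι : Type*} {G : SimpleGraph V} {T : Set V} {B : ι → Set V} {owner : ι → V}
  {n : ℕ} {σ : V ≃ Fin n}

lemma exists_block_of_triangulation_adj (hG : IsBlockAttachment G T B owner)
    (hT : (G.induce T).IsTree) (r : T)
    (hchild : ∀ u v : T, (G.induce T).Adj u v →
      (G.induce T).dist r u < (G.induce T).dist r v → σ v < σ u)
    (hbelow : ∀ k, ∀ v ∈ B k, ∀ t ∈ T, σ v < σ t) {a b : V} (hab : ¬G.Adj a b)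
    (h : (triangulation σ G).Adj a b) :
    ∃ k, ∃ w : G.Walk a b, IsFillWalk σ n w ∧ ∀ x ∈ w.support, x ∈ B k := by
  obtain ⟨hne, w, hw⟩ := (triangulation_adj_iff σ).1 h
  rcases hG.mem_cover a with ha | ⟨k, ha⟩
  · rcases hG.mem_cover b with hb | ⟨k, hb⟩
    · exact absurd (hG.adj_of_isFillWalk_of_mem_tree hT r hchild ha hb hne w hw) hab
    · refine ⟨k, w, hw, fun x hx => ?_⟩
      exact hG.mem_of_mem_support_of_isFillWalk hbelow hb (fun h => hab h.symm) w.reverse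
        hw.reverse x (by simpa using hx)
  · exact ⟨k, w, hw, hG.mem_of_mem_support_of_isFillWalk hbelow ha hab w hw⟩

theorem isGBOrdering (hG : IsBlockAttachment G T B owner) (hT : (G.induce T).IsTree) (r : T)
    (hchild : ∀ u v : T, (G.induce T).Adj u v →
      (G.induce T).dist r u < (G.induce T).dist r v → σ v < σ u)
    (hbelow : ∀ k, ∀ v ∈ B k, ∀ t ∈ T, σ v < σ t) {c : ι → ℕ} (τ : ∀ k, B k ≃ Fin (c k))
    (hτ : ∀ k (a b : B k), σ a < σ b → τ k a < τ k b)
    (hB : ∀ k, IsGBOrdering (τ k) (G.induce (B k))) : IsGBOrdering σ G := by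
  rintro ⟨x, y, z, hxy, hyz, hxz, fxy, fyz, fxz⟩
  obtain ⟨k, wxy, hwxy, hxyk⟩ := hG.exists_block_of_triangulation_adj hT r hchild hbelow hxy fxy
  obtain ⟨k', wyz, hwyz, hyzk⟩ := hG.exists_block_of_triangulation_adj hT r hchild hbelow hyz fyz
  obtain ⟨k'', wxz, hwxz, hxzk⟩ := hG.exists_block_of_triangulation_adj hT r hchild hbelow hxz fxz
  obtain rfl : k = k' := hG.eq_of_mem (hxyk y wxy.end_mem_support) (hyzk y wyz.start_mem_support)
  obtain rfl : k = k'' := hG.eq_of_mem (hxyk x wxy.start_mem_support) (hxzk x wxz.start_mem_support)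
  exact hB k ⟨⟨x, hxyk x wxy.start_mem_support⟩, ⟨y, hyzk y wyz.start_mem_support⟩,
    ⟨z, hyzk z wyz.end_mem_support⟩, hxy, hyz, hxz,
    triangulation_induce_adj σ (τ k) (hτ k) fxy.ne wxy hwxy hxyk,
    triangulation_induce_adj σ (τ k) (hτ k) fyz.ne wyz hwyz hyzk,
    triangulation_induce_adj σ (τ k) (hτ k) fxz.ne wxz hwxz hxzk⟩

end IsBlockAttachment

/-- Tree based expansion: let the vertex set `Fin N` (with its identity
labelling) be partitioned into the vertex set `TV` of a rooted tree and blocks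
`blocks 0, …, blocks (m-1)` of attached graphs, each block attached by joining every one of
its vertices to its owner tree vertex.  If the induced graph on `TV` is a tree, every tree
vertex has a larger label than each of its children (neighbours farther from the root), every
block vertex has a smaller label than every tree vertex, the induced (increasing-label)
ordering on every block is a GB ordering of the induced graph on that block, and the only
edges are tree edges, within-block edges and owner–block edges, then the identity labelling is
a GB ordering of `G`; in particular `G` is a Generalized Bartlett graph. -/
theorem isGB_tree_expansion (N : ℕ) (G : SimpleGraph (Fin N))
    (TV : Finset (Fin N)) (root : Fin N) (hroot : root ∈ TV)
    (m : ℕ) (blocks : Fin m → Finset (Fin N)) (owner : Fin m → Fin N)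
    (howner : ∀ k, owner k ∈ TV)
    (hblock_tree_disj : ∀ k, ∀ v ∈ blocks k, v ∉ TV)
    (hblocks_disj : ∀ k k', k ≠ k' → ∀ v ∈ blocks k, v ∉ blocks k')
    (hcover : ∀ v : Fin N, v ∈ TV ∨ ∃ k, v ∈ blocks k)
    (htree : (G.induce (↑TV : Set (Fin N))).IsTree)
    (hchild_label : ∀ u v : (↑TV : Set (Fin N)),
        (G.induce (↑TV : Set (Fin N))).Adj u v →
        (G.induce (↑TV : Set (Fin N))).dist ⟨root, by simpa using hroot⟩ u <
          (G.induce (↑TV : Set (Fin N))).dist ⟨root, by simpa using hroot⟩ v →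
        (v : Fin N) < (u : Fin N))
    (hbelow : ∀ k, ∀ v ∈ blocks k, ∀ t ∈ TV, v < t)
    (hblocksGB : ∀ (k : Fin m) (σ : (↑(blocks k) : Set (Fin N)) ≃ Fin ((blocks k).card)),
        (∀ a b : (↑(blocks k) : Set (Fin N)), (a : Fin N) ≤ (b : Fin N) ↔ σ a ≤ σ b) →
        IsGBOrdering σ (G.induce (↑(blocks k) : Set (Fin N))))
    (hattach : ∀ k, ∀ v ∈ blocks k, G.Adj (owner k) v)
    (hedges : ∀ u v : Fin N, G.Adj u v →
        (u ∈ TV ∧ v ∈ TV) ∨ (∃ k, u ∈ blocks k ∧ v ∈ blocks k) ∨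
        (∃ k, u = owner k ∧ v ∈ blocks k) ∨ (∃ k, v = owner k ∧ u ∈ blocks k)) :
    IsGBOrdering (Equiv.refl (Fin N)) G ∧ IsGB G := by
  have hG : IsBlockAttachment G ↑TV (fun k => ↑(blocks k)) owner :=
    ⟨howner, hblock_tree_disj, hblocks_disj, hcover, hattach, hedges⟩
  let τ (k : Fin m) : (↑(blocks k) : Set (Fin N)) ≃o Fin (blocks k).card :=
    ((blocks k).orderIsoOfFin rfl).symm
  have hGB : IsGBOrdering (Equiv.refl (Fin N)) G :=
    hG.isGBOrdering htree _ hchild_label hbelow (fun k => (τ k).toEquiv)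
      (fun k _ _ => (τ k).lt_iff_lt.2) fun k => hblocksGB k _ fun _ _ => (τ k).le_iff_le.symm
  exact ⟨hGB, N, _, hGB⟩
end

section
/- (Theorem 5, part 1: Gaussian full conditionals of the independent Cholesky entries.) Let G be a graph on {1,…,p} with edge set E such that the identity ordering is a Generalized Bartlett ordering of G, let U be symmetric positive definite, and δ ∈ (0,∞)^p. Fix (i,j) ∈ E with i > j, fix all independent entries ℓ_{rs} other than ℓ_{ij} at arbitrary real values, and fix D̃ ∈ (0,∞)^p. Then there exist constants C > 0, a > 0, and b ∈ ℝ (depending on the fixed values) such that for all t ∈ ℝ, π*_{U,δ}(L_I[ℓ_{ij} := t], D(D̃)) = C · exp(−a(t − b)²); i.e., the full conditional density of ℓ_{ij} under the generalized G-Wishart distribution is univariate Gaussian. -/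
open SimpleGraph

variable {V : Type*}

open Matrix
open scoped Classical BigOperators

/-- Column `j` (as a natural number), row `i`, of the modified Cholesky factor `L(L_I, D)`. -/
noncomputable def cholCol (p : ℕ) (G : SimpleGraph (Fin p)) (ℓ : Fin p → Fin p → ℝ)
    (D : Fin p → ℝ) : ℕ → Fin p → ℝ
  | j => fun i =>
    if hj : j < p then
      if (i : ℕ) = j then 1
      else if (i : ℕ) < j then 0
      else if G.Adj i ⟨j, hj⟩ then ℓ i ⟨j, hj⟩
      else -(∑ k ∈ (Finset.range j).attach,
          cholCol p G ℓ D k.1 i * cholCol p G ℓ D k.1 ⟨j, hj⟩ *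
            D ⟨k.1, (Finset.mem_range.mp k.2).trans hj⟩) / D ⟨j, hj⟩
    else 0
termination_by j => j
decreasing_by all_goals exact Finset.mem_range.mp k.2

/-- The modified Cholesky factor `L(L_I, D)` as a matrix. -/
noncomputable def cholMat (p : ℕ) (G : SimpleGraph (Fin p)) (ℓ : Fin p → Fin p → ℝ)
    (D : Fin p → ℝ) : Matrix (Fin p) (Fin p) ℝ :=
  Matrix.of fun i j => cholCol p G ℓ D (j : ℕ) i

/-- `Ω(L_I, D) = L D Lᵀ`. -/
noncomputable def OmegaMat (p : ℕ) (G : SimpleGraph (Fin p)) (ℓ : Fin p → Fin p → ℝ)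
    (D : Fin p → ℝ) : Matrix (Fin p) (Fin p) ℝ :=
  cholMat p G ℓ D * Matrix.diagonal D * (cholMat p G ℓ D)ᵀ

/-- `ν_j = #{i : i > j, (i,j) ∈ E}`. -/
noncomputable def nuG (p : ℕ) (G : SimpleGraph (Fin p)) (j : Fin p) : ℕ :=
  (Finset.univ.filter fun i : Fin p => j < i ∧ G.Adj i j).card

/-- Recover `D` from `D̃`:  `D_k = ∏_{l ≤ k} D̃_l`. -/
noncomputable def Dof (p : ℕ) (Dt : Fin p → ℝ) (k : Fin p) : ℝ :=
  ∏ l ∈ Finset.Iic k, Dt l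

/-- Update the `(r,s)` entry of a function of two indices. -/
def updEntry (p : ℕ) (ℓ : Fin p → Fin p → ℝ) (r s : Fin p) (t : ℝ) :
    Fin p → Fin p → ℝ :=
  fun i j => if i = r ∧ j = s then t else ℓ i j

/-- The unnormalized generalized `G`-Wishart density `π*_{U,δ}`, as a function of the full
Cholesky data `(ℓ, D)`:  `(∏_j D_j^{(δ_j + 2ν_j)/2}) · exp(−tr(Ω U)/2)`. -/
noncomputable def gwDensFull (p : ℕ) (G : SimpleGraph (Fin p))
    (U : Matrix (Fin p) (Fin p) ℝ) (δ : Fin p → ℝ)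
    (ℓ : Fin p → Fin p → ℝ) (D : Fin p → ℝ) : ℝ :=
  (∏ j : Fin p, D j ^ ((δ j + 2 * (nuG p G j : ℝ)) / 2)) *
    Real.exp (-(OmegaMat p G ℓ D * U).trace / 2)

/-! Entry by entry, the modified Cholesky factor is an affine function of the free entry
`t = ℓ_{ij}`. By induction over the columns, `L_{uv}` can depend on `t` only when `(u, v) = (i, j)`
or `(u, v)` is a fill-in edge of `D^σ(E)` in a column after `j`; and for a fill-in position
`(u, v)` the Generalized Bartlett condition forbids two such entries `L_{uk}`, `L_{vk}` in a common
column `k`, so the products in the recursion for `L_{uv}` never become quadratic in `t`.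
Hence `L = L₀ + t B` with `B_{ij} = 1`, so `tr(Ω U)` is a quadratic polynomial in `t` whose
leading coefficient `tr(B D Bᵀ U)` is positive because `U` is positive definite, and completing
the square gives the Gaussian. -/

open Finset

section Triangulation

variable {V : Type*} {n : ℕ} (σ : V ≃ Fin n) (G : SimpleGraph V)

lemma le_triStep (H : SimpleGraph V) (k : ℕ) : H ≤ triStep σ H k := fun _ _ h => Or.inl h

lemma monotone_triSeq : Monotone (triSeq σ G) :=
  monotone_nat_of_le_succ fun k => le_triStep σ (triSeq σ G k) k

lemma le_triangulation : G ≤ triangulation σ G :=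
  monotone_triSeq σ G (Nat.zero_le _)

lemma triSeq_adj_of_le {u m : V} {N : ℕ} (hN : (σ m : ℕ) ≤ N) (h : (triSeq σ G N).Adj u m) :
    (triSeq σ G (σ m)).Adj u m := by
  induction N with
  | zero => rwa [Nat.le_zero.mp hN]
  | succ N ih =>
    rcases hN.eq_or_lt with hN | hN
    · rwa [hN]
    · rcases h with h | ⟨-, -, -, hm, -⟩
      · exact ih (Nat.lt_succ_iff.mp hN) h
      · omega

lemma triangulation_adj_of_adj_of_adj {u v m : V} (hmv : σ m < σ v) (hvu : σ v < σ u)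
    (hum : (triangulation σ G).Adj u m) (hvm : (triangulation σ G).Adj v m) :
    (triangulation σ G).Adj u v := by
  rw [Fin.lt_def] at hmv hvu
  have hun := (σ u).isLt
  have hstep : (triSeq σ G (σ m + 1)).Adj u v := by
    refine Or.inr ⟨fun h => by simp [h] at hvu, (σ m).isLt, by omega, hmv, ?_, ?_⟩ <;>
      simpa using triSeq_adj_of_le σ G (N := n - 2) (by omega) ‹_›
  exact monotone_triSeq σ G (by omega) hstep

end Triangulation

section Cholesky

variable {p : ℕ} (G : SimpleGraph (Fin p)) (ℓ : Fin p → Fin p → ℝ) (D : Fin p → ℝ)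

lemma cholMat_of_le {u v : Fin p} (h : u ≤ v) :
    cholMat p G ℓ D u v = (1 : Matrix (Fin p) (Fin p) ℝ) u v := by
  rw [cholMat, Matrix.of_apply, cholCol]
  dsimp only
  rw [dif_pos v.isLt, Matrix.one_apply]
  rcases h.eq_or_lt with rfl | h
  · simp
  · simp [Fin.val_ne_of_ne h.ne, h.ne, Fin.lt_def.mp h]

lemma cholMat_of_adj {u v : Fin p} (h : v < u) (hadj : G.Adj u v) :
    cholMat p G ℓ D u v = ℓ u v := by
  rw [Fin.lt_def] at h
  rw [cholMat, Matrix.of_apply, cholCol]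
  dsimp only
  rw [dif_pos v.isLt, if_neg (by omega), if_neg (by omega), if_pos hadj]

lemma cholMat_of_not_adj {u v : Fin p} (h : v < u) (hadj : ¬ G.Adj u v) :
    cholMat p G ℓ D u v =
      -(∑ k ∈ Iio v, cholMat p G ℓ D u k * cholMat p G ℓ D v k * D k) / D v := by
  rw [Fin.lt_def] at h
  rw [cholMat, Matrix.of_apply, cholCol]
  dsimp only
  rw [dif_pos v.isLt, if_neg (by omega), if_neg (by omega), if_neg hadj]
  congr 2
  refine sum_bij' (fun k _ => ⟨k.1, (mem_range.mp k.2).trans v.isLt⟩)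
    (fun k hk => ⟨k, mem_range.mpr (Fin.lt_def.mp (mem_Iio.mp hk))⟩)
    (fun k _ => mem_Iio.mpr (Fin.lt_def.mpr (mem_range.mp k.2))) (fun _ _ => mem_attach _ _)
    ?_ ?_ ?_ <;> simp

theorem adj_triangulation_of_cholMat_ne_zero {u v : Fin p} (hvu : v < u)
    (h : cholMat p G ℓ D u v ≠ 0) : (triangulation (Equiv.refl (Fin p)) G).Adj u v := by
  induction v using WellFoundedLT.induction generalizing u with
  | ind v ih =>
  by_contra hT
  refine h ?_
  rw [cholMat_of_not_adj G ℓ D hvu fun hG => hT (le_triangulation _ G hG), sum_eq_zero, neg_zero,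
    zero_div]
  intro k hk
  have hkv := mem_Iio.mp hk
  by_contra hne
  obtain ⟨⟨huk, hvk⟩, -⟩ := by simpa only [mul_ne_zero_iff] using hne
  exact hT (triangulation_adj_of_adj_of_adj _ G hkv hvu (ih k hkv (hkv.trans hvu) huk)
    (ih k hkv hkv hvk))

end Cholesky

section Affine

variable {R : Type*} [CommRing R]

def IsAffineFun (f : R → R) : Prop := ∀ t, f t = f 0 + t * (f 1 - f 0)

namespace IsAffineFun

lemma const (c : R) : IsAffineFun fun _ : R => c := fun t => by ring

lemma mul {f g : R → R} (hf : IsAffineFun f) (hg : IsAffineFun g)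
    (h : (f 1 - f 0) * (g 1 - g 0) = 0) : IsAffineFun fun t => f t * g t := fun t => by
  dsimp only
  rw [hf t, hg t]
  linear_combination (t ^ 2 - t) * h

lemma sum {ι : Type*} {s : Finset ι} {f : ι → R → R} (hf : ∀ k ∈ s, IsAffineFun (f k)) :
    IsAffineFun fun t => ∑ k ∈ s, f k t := fun t => by
  dsimp only
  rw [sum_congr rfl fun k hk => hf k hk t, sum_add_distrib, ← mul_sum, sum_sub_distrib]

lemma neg_div {K : Type*} [Field K] {f : K → K} (hf : IsAffineFun f) (c : K) :
    IsAffineFun fun t => -f t / c :=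
  fun t => by dsimp only; rw [hf t]; ring

end IsAffineFun

end Affine

lemma ne_and_ne_zero_of_mul_ne_mul {R : Type*} [Ring R] [NoZeroDivisors R] {a b c d : R}
    (h : (a - c) * (b - d) = 0) (hne : a * b ≠ c * d) : (a ≠ c ∧ d ≠ 0) ∨ (b ≠ d ∧ c ≠ 0) := by
  rcases mul_eq_zero.mp h with h | h
  · obtain rfl := sub_eq_zero.mp h
    exact Or.inr ⟨fun hbd => hne (by rw [hbd]), fun hc => hne (by rw [hc, zero_mul, zero_mul])⟩
  · obtain rfl := sub_eq_zero.mp h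
    exact Or.inl ⟨fun hac => hne (by rw [hac]), fun hb => hne (by rw [hb, mul_zero, mul_zero])⟩

section FreeEntry

variable {p : ℕ} (G : SimpleGraph (Fin p)) (i j : Fin p)

/-- The positions of `L` whose value may depend on the free entry `ℓ_{ij}`. -/
def IsDownstream (u v : Fin p) : Prop :=
  (triangulation (Equiv.refl (Fin p)) G).Adj u v ∧ (u = i ∧ v = j ∨ j < v ∧ ¬ G.Adj u v)

variable {G i j}

lemma IsDownstream.le {u v : Fin p} (h : IsDownstream G i j u v) : j ≤ v := by
  rcases h.2 with ⟨-, rfl⟩ | ⟨h, -⟩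
  exacts [le_rfl, h.le]

lemma not_isDownstream_and_isDownstream (hGB : IsGBOrdering (Equiv.refl (Fin p)) G)
    {u v k : Fin p} (hkv : k < v) (hvu : v < u) (huv : ¬ G.Adj u v) :
    ¬ (IsDownstream G i j u k ∧ IsDownstream G i j v k) := by
  rintro ⟨⟨huk, ⟨rfl, rfl⟩ | ⟨hku, hGuk⟩⟩, ⟨hvk, ⟨hvi, hkj⟩ | ⟨hkv', hGvk⟩⟩⟩
  · exact hvu.ne hvi
  · exact hkv'.ne rfl
  · exact hku.ne hkj.symm
  · exact hGB ⟨u, k, v, hGuk, fun h => hGvk h.symm, huv, huk, hvk.symm,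
      triangulation_adj_of_adj_of_adj _ G hkv hvu huk hvk⟩

theorem cholMat_updEntry_isAffineFun_and_isDownstream (hGB : IsGBOrdering (Equiv.refl (Fin p)) G)
    (ℓ : Fin p → Fin p → ℝ) (D : Fin p → ℝ) (u v : Fin p) :
    IsAffineFun (fun t => cholMat p G (updEntry p ℓ i j t) D u v) ∧
      (cholMat p G (updEntry p ℓ i j 1) D u v ≠ cholMat p G (updEntry p ℓ i j 0) D u v →
        IsDownstream G i j u v) := by
  induction v using WellFoundedLT.induction generalizing u with
  | ind v ih =>
  set L := fun t => cholMat p G (updEntry p ℓ i j t) D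
  rcases le_or_gt u v with huv | hvu
  · simp only [cholMat_of_le _ _ _ huv]
    exact ⟨IsAffineFun.const _, fun h => (h rfl).elim⟩
  by_cases hadj : G.Adj u v
  · simp only [cholMat_of_adj _ _ _ hvu hadj, updEntry]
    by_cases hij : u = i ∧ v = j
    · simp only [if_pos hij]
      exact ⟨fun t => by ring, fun _ => ⟨le_triangulation _ G hadj, Or.inl hij⟩⟩
    · simp only [if_neg hij]
      exact ⟨IsAffineFun.const _, fun h => (h rfl).elim⟩
  have hslope : ∀ k ∈ Iio v, (L 1 u k - L 0 u k) * (L 1 v k - L 0 v k) = 0 := by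
    intro k hk
    have hkv := mem_Iio.mp hk
    by_contra h
    obtain ⟨hu, hv⟩ := mul_ne_zero_iff.mp h
    exact not_isDownstream_and_isDownstream hGB hkv hvu hadj
      ⟨(ih k hkv u).2 (sub_ne_zero.mp hu), (ih k hkv v).2 (sub_ne_zero.mp hv)⟩
  have hfill : ∀ t, L t u v = -(∑ k ∈ Iio v, L t u k * L t v k * D k) / D v :=
    fun t => cholMat_of_not_adj G _ D hvu hadj
  rw [funext hfill]
  refine ⟨IsAffineFun.neg_div (IsAffineFun.sum fun k hk =>
    ((ih k (mem_Iio.mp hk) u).1.mul (ih k (mem_Iio.mp hk) v).1 (hslope k hk)).mul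
      (IsAffineFun.const (D k)) (by ring)) _, fun hne => ?_⟩
  obtain ⟨k, hk, hterm⟩ : ∃ k ∈ Iio v, L 1 u k * L 1 v k * D k ≠ L 0 u k * L 0 v k * D k := by
    by_contra! h
    apply hne
    change L 1 u v = L 0 u v
    rw [hfill, hfill, sum_congr rfl h]
  have hkv := mem_Iio.mp hk
  obtain ⟨hTu, hTv, hjk⟩ : (triangulation (Equiv.refl (Fin p)) G).Adj u k ∧
      (triangulation (Equiv.refl (Fin p)) G).Adj v k ∧ j ≤ k := by
    rcases ne_and_ne_zero_of_mul_ne_mul (hslope k hk) fun h => hterm (by rw [h])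
      with ⟨hu, hv0⟩ | ⟨hv, hu0⟩
    · have hd := (ih k hkv u).2 hu
      exact ⟨hd.1, adj_triangulation_of_cholMat_ne_zero G _ D hkv hv0, hd.le⟩
    · have hd := (ih k hkv v).2 hv
      exact ⟨adj_triangulation_of_cholMat_ne_zero G _ D (hkv.trans hvu) hu0, hd.1, hd.le⟩
  exact ⟨triangulation_adj_of_adj_of_adj _ G hkv hvu hTu hTv, Or.inr ⟨hjk.trans_lt hkv, hadj⟩⟩

end FreeEntry

section MatrixTrace

variable {m n : Type*} [Fintype m] [Fintype n]

lemma trace_add_smul_mul_mul_transpose_mul {R : Type*} [CommRing R]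
    (A B : Matrix m n R) (M : Matrix n n R) (U : Matrix m m R) (t : R) :
    ((A + t • B) * M * (A + t • B)ᵀ * U).trace =
      (A * M * Aᵀ * U).trace + t * ((A * M * Bᵀ * U).trace + (B * M * Aᵀ * U).trace) +
        t ^ 2 * (B * M * Bᵀ * U).trace := by
  simp only [transpose_add, transpose_smul, Matrix.add_mul, Matrix.mul_add, Matrix.smul_mul,
    Matrix.mul_smul, trace_add, trace_smul, smul_eq_mul]
  ring

lemma trace_mul_diagonal_mul_transpose_mul_pos [DecidableEq n]
    {U : Matrix m m ℝ} (hU : U.PosDef) {d : n → ℝ} (hd : ∀ k, 0 < d k) {B : Matrix m n ℝ}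
    (hB : B ≠ 0) : 0 < (B * diagonal d * Bᵀ * U).trace := by
  have hcol : ∀ k, (Bᵀ * U * B) k k = star (Bᵀ k) ⬝ᵥ U *ᵥ (Bᵀ k) := by
    intro k
    simp only [mul_apply, transpose_apply, dotProduct, mulVec, star_trivial, Finset.sum_mul,
      Finset.mul_sum]
    rw [Finset.sum_comm]
    exact Finset.sum_congr rfl fun _ _ => Finset.sum_congr rfl fun _ _ => by ring
  obtain ⟨x, k, hxk⟩ : ∃ x k, B x k ≠ 0 := by
    by_contra! h; exact hB (Matrix.ext h)
  rw [Matrix.mul_assoc, Matrix.mul_assoc, trace_mul_comm, Matrix.mul_assoc]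
  simp only [trace, Matrix.diag, diagonal_mul, hcol]
  refine Finset.sum_pos' (fun i _ => mul_nonneg (hd i).le
    (hU.posSemidef.dotProduct_mulVec_nonneg _)) ⟨k, Finset.mem_univ _, mul_pos (hd k) ?_⟩
  exact hU.dotProduct_mulVec_pos fun h => hxk (congrFun h x)

end MatrixTrace

lemma exists_gaussian_of_exp_quadratic {K c₀ c₁ c₂ : ℝ} (hK : 0 < K) (hc₂ : 0 < c₂) :
    ∃ C a b : ℝ, 0 < C ∧ 0 < a ∧
      ∀ t, K * Real.exp (-(c₀ + t * c₁ + t ^ 2 * c₂) / 2) = C * Real.exp (-(a * (t - b) ^ 2)) :=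
  ⟨K * Real.exp (-(c₀ / 2 - c₁ ^ 2 / (8 * c₂))), c₂ / 2, -c₁ / (2 * c₂), by positivity,
    by positivity, fun t => by
      rw [mul_assoc, ← Real.exp_add]
      congr 2
      field_simp
      ring⟩

theorem gaussian_full_conditional_general (p : ℕ) (G : SimpleGraph (Fin p))
    (hGB : IsGBOrdering (Equiv.refl (Fin p)) G)
    (U : Matrix (Fin p) (Fin p) ℝ) (hU : U.PosDef)
    (δ : Fin p → ℝ)
    (i j : Fin p) (hij : j < i) (hadj : G.Adj i j)
    (ℓ : Fin p → Fin p → ℝ) (Dt : Fin p → ℝ) (hDt : ∀ k, 0 < Dt k) :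
    ∃ C a b : ℝ, 0 < C ∧ 0 < a ∧
      ∀ t : ℝ,
        gwDensFull p G U δ (updEntry p ℓ i j t) (Dof p Dt) =
          C * Real.exp (-(a * (t - b) ^ 2)) := by
  set D := Dof p Dt
  have hD : ∀ k, 0 < D k := fun k => prod_pos fun l _ => hDt l
  set L₀ := cholMat p G (updEntry p ℓ i j 0) D
  set B := cholMat p G (updEntry p ℓ i j 1) D - L₀
  have hL : ∀ t : ℝ, cholMat p G (updEntry p ℓ i j t) D = L₀ + t • B := fun t => by
    ext u v
    exact (cholMat_updEntry_isAffineFun_and_isDownstream hGB ℓ D u v).1 t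
  have hB : B ≠ 0 := fun h => by
    simpa [B, L₀, cholMat_of_adj G _ D hij hadj, updEntry] using congrFun (congrFun h i) j
  obtain ⟨C, a, b, hC, ha, hgauss⟩ := exists_gaussian_of_exp_quadratic
    (prod_pos fun k _ => Real.rpow_pos_of_pos (hD k) ((δ k + 2 * (nuG p G k : ℝ)) / 2))
    (trace_mul_diagonal_mul_transpose_mul_pos hU hD hB)
  refine ⟨C, a, b, hC, ha, fun t => ?_⟩
  rw [gwDensFull, OmegaMat, hL, trace_add_smul_mul_mul_transpose_mul]
  exact hgauss t

/-- Theorem 5, part 1: if the identity ordering is a Generalized Bartlett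
ordering, `U` is positive definite and `δ > 0`, then the full conditional density of any
independent Cholesky entry `ℓ_{ij}` ((i,j) ∈ E, i > j), all other independent entries and all
of `D̃` being fixed, is a (unnormalized) univariate Gaussian:  `C · exp(−a(t−b)²)` with
`C > 0`, `a > 0`. -/
theorem gaussian_full_conditional (p : ℕ) (G : SimpleGraph (Fin p))
    (hGB : IsGBOrdering (Equiv.refl (Fin p)) G)
    (U : Matrix (Fin p) (Fin p) ℝ) (hU : U.PosDef)
    (δ : Fin p → ℝ) (hδ : ∀ i, 0 < δ i)
    (i j : Fin p) (hij : j < i) (hadj : G.Adj i j)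
    (ℓ : Fin p → Fin p → ℝ) (Dt : Fin p → ℝ) (hDt : ∀ k, 0 < Dt k) :
    ∃ C a b : ℝ, 0 < C ∧ 0 < a ∧
      ∀ t : ℝ,
        gwDensFull p G U δ (updEntry p ℓ i j t) (Dof p Dt) =
          C * Real.exp (-(a * (t - b) ^ 2)) :=
  gaussian_full_conditional_general p G hGB U hU δ i j hij hadj ℓ Dt hDt
end
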